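/- arXiv:2005.12819 — 5 statements merged into one kernel-verified Lean document; each statement's English description precedes it below -/
import Mathlib

section
/- Let S₁ and S₂ be topological spaces, let Φ₁: S₁ → S₁ and Φ₂: S₂ → S₂ be homeomorphisms, and let ψ: S₁ → S₂ be a continuous surjective map satisfying ψ ∘ Φ₁ = Φ₂ ∘ ψ. If property (D)_{S₁,Φ₁} holds, then property (D)_{S₂,Φ₂} holds. -/
/-- The set of points of `S` fixed by some positive power of `Φ`. -/
def fixInfty {S : Type*} (Φ : S → S) : Set S := ⋃ n > 0, {x | Φ^[n] x = x}

/-- Property `(D)_{S,Φ}`: for every closed subset `Z ⊆ S` with `Φⁿ(Z) = Z` for some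
integer `n > 0`, the set `Z ∩ S^{Φ^∞}` is dense in `Z`. -/
def PropertyD {S : Type*} [TopologicalSpace S] (Φ : S ≃ₜ S) : Prop :=
  ∀ Z : Set S, IsClosed Z → (∃ n > 0, (⇑Φ)^[n] '' Z = Z) →
    Z ⊆ closure (Z ∩ fixInfty ⇑Φ)

theorem density_property_descends_along_continuous_surjection
    {S₁ S₂ : Type*} [TopologicalSpace S₁] [TopologicalSpace S₂]
    (Φ₁ : S₁ ≃ₜ S₁) (Φ₂ : S₂ ≃ₜ S₂) (ψ : S₁ → S₂)
    (hcont : Continuous ψ) (hsurj : Function.Surjective ψ)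
    (hcomm : ψ ∘ ⇑Φ₁ = ⇑Φ₂ ∘ ψ)
    (hD : PropertyD Φ₁) : PropertyD Φ₂ := by
  intro Z hZ ⟨n, hn, hfix⟩
  have hsemi : Function.Semiconj ψ ⇑Φ₁ ⇑Φ₂ := fun x => congrFun hcomm x
  have hsemin : ∀ m x, ψ ((⇑Φ₁)^[m] x) = (⇑Φ₂)^[m] (ψ x) := fun m x =>
    (hsemi.iterate_right m) x
  set W : Set S₁ := ψ ⁻¹' Z with hW
  have hWclosed : IsClosed W := hZ.preimage hcont
  have hWfix : (⇑Φ₁)^[n] '' W = W := by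
    ext x
    constructor
    · rintro ⟨y, hy, rfl⟩
      show ψ ((⇑Φ₁)^[n] y) ∈ Z
      rw [hsemin]
      rw [← hfix]
      exact ⟨ψ y, hy, rfl⟩
    · intro hx
      refine ⟨(Φ₁.symm : S₁ → S₁)^[n] x, ?_, ?_⟩
      · show ψ _ ∈ Z
        have hsemi' : Function.Semiconj ψ ⇑Φ₁.symm ⇑Φ₂.symm := by
          intro y
          apply Φ₂.injective
          rw [Φ₂.apply_symm_apply, ← hsemi ((Φ₁.symm : S₁ → S₁) y),
            Φ₁.apply_symm_apply]
        rw [(hsemi'.iterate_right n) x]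
        have hx2 : ψ x ∈ Z := hx
        rw [← hfix] at hx2
        obtain ⟨z, hz, hzx⟩ := hx2
        have hLI : Function.LeftInverse ⇑Φ₂.symm ⇑Φ₂ := Φ₂.symm_apply_apply
        rw [← hzx, (hLI.iterate n) z]
        exact hz
      · have : Function.LeftInverse ⇑Φ₁ ⇑Φ₁.symm := Φ₁.apply_symm_apply
        exact this.iterate n x
  have hWdense := hD W hWclosed ⟨n, hn, hWfix⟩
  intro z hz
  obtain ⟨x, rfl⟩ := hsurj z
  have hx : x ∈ W := hz
  have := hWdense hx
  have hmap : ψ '' (W ∩ fixInfty ⇑Φ₁) ⊆ Z ∩ fixInfty ⇑Φ₂ := by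
    rintro _ ⟨y, ⟨hyW, hyF⟩, rfl⟩
    refine ⟨hyW, ?_⟩
    simp only [fixInfty, Set.mem_iUnion, Set.mem_setOf_eq] at hyF ⊢
    obtain ⟨m, hm, hym⟩ := hyF
    exact ⟨m, hm, by rw [← hsemin, hym]⟩
  exact closure_mono hmap (image_closure_subset_closure_image hcont ⟨x, this, rfl⟩)
end

section
/- Let ψ♯: R₂ → R₁ be a finite homomorphism of commutative Noetherian Jacobson rings, and let Φ₁: R₁ → R₁ and Φ₂: R₂ → R₂ be ring automorphisms satisfying ψ♯ ∘ Φ₂ = Φ₁ ∘ ψ♯. Let ψ: Spm R₁ → Spm R₂ be the induced map sending a maximal ideal m of R₁ to (ψ♯)⁻¹(m) (which is maximal since ψ♯ is integral), and let Φ₁, Φ₂ also denote the induced homeomorphisms m ↦ Φᵢ(m) of Spm R₁ and Spm R₂. If property (D)_{Spm R₂, Φ₂} holds, then property (D)_{Spm R₁, Φ₁} holds. -/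
/-!
Write a closed `Φ₁ⁿ`-stable `Z ⊆ Spm R₁` as `V(I)` with `I` radical. Then `Φ₁ⁿ` permutes the
finitely many minimal primes of `I`, so it suffices to treat `Z = V(p)` for a `Φ₁`-periodic prime
`p`. Its image `ψ(V(p)) = V(q)`, `q = ψ♯⁻¹(p)`, is closed and `Φ₂`-periodic, so its
`Φ₂`-periodic points are dense in it. By incomparability and the Jacobson property, `ψ` maps
every proper closed subset of `V(p)` onto a proper closed subset of `V(q)`; hence the points of
`V(p)` lying over `Φ₂`-periodic points are dense in `V(p)`. These points are `Φ₁`-periodic,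
because the fibres of the finite map `ψ` are finite and stable under a power of `Φ₁`.
-/

open Function Set

theorem fixInfty_eq_periodicPts {S : Type*} (Φ : S → S) : fixInfty Φ = periodicPts Φ := by
  ext x
  simp [fixInfty, mem_periodicPts, IsPeriodicPt, IsFixedPt]

theorem propertyD_iff_periodicPts {S : Type*} [TopologicalSpace S] (Φ : S ≃ₜ S) :
    PropertyD Φ ↔ ∀ Z : Set S, IsClosed Z → Z ∈ periodicPts (image Φ) →
      Z ⊆ closure (Z ∩ periodicPts Φ) := by
  simp only [PropertyD, fixInfty_eq_periodicPts, mem_periodicPts, IsPeriodicPt, IsFixedPt,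
    ← image_iterate_eq]

namespace Function

variable {α β : Type*} {f : α → α}

theorem mem_periodicPts_of_mem_periodicPts_iterate {n : ℕ} (hn : 0 < n) {x : α}
    (hx : x ∈ periodicPts f^[n]) : x ∈ periodicPts f := by
  obtain ⟨k, hk, hx⟩ := hx
  exact mk_mem_periodicPts (Nat.mul_pos hn hk) (by rw [IsPeriodicPt, iterate_mul]; exact hx)

theorem _root_.Set.Finite.subset_periodicPts {s : Set α} (hs : s.Finite) (hf : InjOn f s)
    (hmaps : MapsTo f s s) : s ⊆ periodicPts f := by
  have := hs.to_subtype
  intro x hx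
  have hval : Semiconj Subtype.val (hmaps.restrict f s s) f := fun _ => rfl
  exact hval.mapsTo_periodicPts ((hmaps.restrict_inj.mpr hf).mem_periodicPts ⟨x, hx⟩)

theorem preimage_periodicPts_subset {g : α → β} {h : β → β} (hf : Injective f)
    (hg : Semiconj g f h) (hfin : ∀ y, (g ⁻¹' {y}).Finite) :
    g ⁻¹' periodicPts h ⊆ periodicPts f := by
  rintro x ⟨n, hn, hx⟩
  refine mem_periodicPts_of_mem_periodicPts_iterate hn
    ((hfin (g x)).subset_periodicPts (hf.iterate n).injOn (fun x' hx' => ?_) rfl)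
  simp only [mem_preimage, mem_singleton_iff] at hx' ⊢
  rw [hg.iterate_right n x', hx', hx.eq]

end Function

theorem IsClosedMap.subset_closure_inter_preimage {X Y : Type*} [TopologicalSpace X]
    [TopologicalSpace Y] {f : X → Y} (hf : IsClosedMap f) {Z : Set X} (hZ : IsClosed Z)
    (hZf : ∀ C, IsClosed C → C ⊆ Z → f '' C = f '' Z → C = Z) {D : Set Y}
    (hD : f '' Z ⊆ closure (f '' Z ∩ D)) : Z ⊆ closure (Z ∩ f ⁻¹' D) := by
  intro x hx
  rw [mem_closure_iff]
  intro U hU hxU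
  have hC : IsClosed (Z ∩ Uᶜ) := hZ.inter hU.isClosed_compl
  have hCZ : f '' (Z ∩ Uᶜ) ⊂ f '' Z := by
    refine (image_mono inter_subset_left).ssubset_of_ne fun h => ?_
    have hx' : x ∈ Z ∩ Uᶜ := (hZf _ hC inter_subset_left h).symm ▸ hx
    exact hx'.2 hxU
  obtain ⟨y, hyZ, hyC⟩ := exists_of_ssubset hCZ
  obtain ⟨_, hyC', ⟨x', hx'Z, rfl⟩, hx'D⟩ :=
    mem_closure_iff.mp (hD hyZ) _ (hf _ hC).isOpen_compl hyC
  have hx'U : x' ∈ U := by_contra fun h => hyC' ⟨x', ⟨hx'Z, h⟩, rfl⟩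
  exact ⟨x', hx'U, hx'Z, hx'D⟩

namespace Ideal

variable {R S : Type*} [CommRing R] [CommRing S]

theorem minimalPrimes_map_ringEquiv (e : R ≃+* S) (I : Ideal R) :
    (I.map (e : R →+* S)).minimalPrimes = Ideal.map (e : R →+* S) '' I.minimalPrimes := by
  have h : Ideal.map (e : R →+* S) = Ideal.comap (e.symm : S →+* R) :=
    funext fun _ => map_comap_of_equiv e
  rw [h, comap_minimalPrimes_eq_of_surjective e.symm.surjective]

theorem mem_periodicPts_of_mem_minimalPrimes [IsNoetherianRing R] (e : R ≃+* R) {I p : Ideal R}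
    (hI : I ∈ periodicPts (Ideal.map (e : R →+* R))) (hp : p ∈ I.minimalPrimes) :
    p ∈ periodicPts (Ideal.map (e : R →+* R)) := by
  obtain ⟨n, hn, hIn⟩ := hI
  have hmaps : MapsTo (Ideal.map (e : R →+* R))^[n] I.minimalPrimes I.minimalPrimes := by
    have h := (Semiconj.iterate_right (minimalPrimes_map_ringEquiv e) n) I
    rw [hIn.eq, ← image_iterate_eq] at h
    exact fun q hq => h ▸ mem_image_of_mem _ hq
  have hinj : Injective (Ideal.map (e : R →+* R)) :=
    LeftInverse.injective (g := Ideal.map (e.symm : R →+* R)) fun _ => map_of_equiv e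
  exact mem_periodicPts_of_mem_periodicPts_iterate hn
    ((finite_minimalPrimes_of_isNoetherianRing R I).subset_periodicPts (hinj.iterate n).injOn
      hmaps hp)

theorem comap_map_of_comp_eq_comp {R' S' : Type*} [CommRing R'] [CommRing S'] {f : R →+* S}
    {f' : R' →+* S'} {e : R ≃+* R'} {e' : S ≃+* S'}
    (h : f'.comp (e : R →+* R') = (e' : S →+* S').comp f) (I : Ideal S) :
    (I.map (e' : S →+* S')).comap f' = (I.comap f).map (e : R →+* R') := by
  have hsymm (x : R') : e'.symm (f' x) = f (e.symm x) := by
    simpa using congrArg e'.symm (RingHom.congr_fun h (e.symm x))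
  ext x
  rw [map_comap_of_equiv, map_comap_of_equiv, mem_comap, mem_comap, mem_comap, mem_comap, hsymm]

/-- Some minimal prime of `J` contracts into `p.comap`, so by incomparability it equals `p`. -/
theorem IsRadical.eq_of_le_of_comap_eq [Algebra R S] [Algebra.IsIntegral R S] [IsNoetherianRing S]
    {J p : Ideal S} [p.IsPrime] (hJ : J.IsRadical) (hpJ : p ≤ J)
    (h : J.comap (algebraMap R S) = p.comap (algebraMap R S)) : J = p := by
  have hfin := J.finite_minimalPrimes_of_isNoetherianRing S
  have hinf : hfin.toFinset.inf (Ideal.comap (algebraMap R S)) ≤ p.comap (algebraMap R S) := by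
    conv_rhs => rw [← h, ← hJ.radical, ← sInf_minimalPrimes, comap_sInf]
    simp [Finset.inf_eq_iInf]
  obtain ⟨P, hP, hPp⟩ := (IsPrime.comap (algebraMap R S)).inf_le'.mp hinf
  rw [Set.Finite.mem_toFinset] at hP
  have hJP : J ≤ P := hP.1.2
  have hPeq : P = p := by
    by_contra hne
    exact (IsIntegral.comap_lt_comap (R := R) ((hpJ.trans hJP).lt_of_ne' hne)).not_ge hPp
  exact le_antisymm (hPeq ▸ hJP) hpJ

end Ideal

namespace MaximalSpectrum

variable {R S : Type*} [CommRing R] [CommRing S]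

def zeroLocus (I : Ideal R) : Set (MaximalSpectrum R) := {m | I ≤ m.asIdeal}

def vanishingIdeal (Z : Set (MaximalSpectrum R)) : Ideal R := ⨅ m ∈ Z, m.asIdeal

@[simp]
theorem mem_zeroLocus {I : Ideal R} {m : MaximalSpectrum R} : m ∈ zeroLocus I ↔ I ≤ m.asIdeal :=
  Iff.rfl

theorem zeroLocus_anti_mono {I J : Ideal R} (h : I ≤ J) : zeroLocus J ⊆ zeroLocus I :=
  fun _ hm => h.trans hm

theorem subset_zeroLocus_iff_le_vanishingIdeal (Z : Set (MaximalSpectrum R)) (I : Ideal R) :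
    Z ⊆ zeroLocus I ↔ I ≤ vanishingIdeal Z := by
  simp [subset_def, vanishingIdeal]

theorem isRadical_vanishingIdeal (Z : Set (MaximalSpectrum R)) : (vanishingIdeal Z).IsRadical :=
  Ideal.isRadical_iInf _ fun m => Ideal.isRadical_iInf _ fun _ => m.isMaximal.isPrime.isRadical

theorem preimage_toPrimeSpectrum_zeroLocus (s : Set R) :
    toPrimeSpectrum ⁻¹' PrimeSpectrum.zeroLocus s = zeroLocus (Ideal.span s) := by
  ext m
  exact Ideal.span_le.symm

theorem isClosed_zeroLocus (I : Ideal R) : IsClosed (zeroLocus I) := by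
  rw [← Ideal.span_eq I, ← preimage_toPrimeSpectrum_zeroLocus]
  exact (PrimeSpectrum.isClosed_zeroLocus _).preimage toPrimeSpectrum_continuous

theorem zeroLocus_vanishingIdeal_of_isClosed {Z : Set (MaximalSpectrum R)} (hZ : IsClosed Z) :
    zeroLocus (vanishingIdeal Z) = Z := by
  obtain ⟨t, ht, rfl⟩ := isClosed_induced_iff.mp hZ
  obtain ⟨s, rfl⟩ := (PrimeSpectrum.isClosed_iff_zeroLocus t).mp ht
  rw [preimage_toPrimeSpectrum_zeroLocus]
  exact (zeroLocus_anti_mono ((subset_zeroLocus_iff_le_vanishingIdeal _ _).mp subset_rfl)).antisymm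
    ((subset_zeroLocus_iff_le_vanishingIdeal _ _).mpr le_rfl)

/-- In a Jacobson ring every radical ideal is the intersection of the maximal ideals above it. -/
theorem zeroLocus_subset_zeroLocus_iff [IsJacobsonRing R] (I J : Ideal R) :
    zeroLocus I ⊆ zeroLocus J ↔ J ≤ I.radical := by
  refine ⟨fun h => ?_, fun h m hm => h.trans (m.isMaximal.isPrime.radical_le_iff.mpr hm)⟩
  rw [Ideal.radical_eq_jacobson]
  refine ((subset_zeroLocus_iff_le_vanishingIdeal _ _).mp h).trans (le_sInf fun K hK => ?_)
  exact iInf₂_le (⟨K, hK.2⟩ : MaximalSpectrum R) hK.1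

section RingEquiv

variable (e : R ≃+* S) {Φ : MaximalSpectrum R → MaximalSpectrum S}

theorem image_zeroLocus_of_ringEquiv (hΦ : ∀ m, (Φ m).asIdeal = m.asIdeal.map (e : R →+* S))
    (I : Ideal R) : Φ '' zeroLocus I = zeroLocus (I.map (e : R →+* S)) := by
  ext n
  constructor
  · rintro ⟨m, hm, rfl⟩
    rw [mem_zeroLocus, hΦ]
    exact Ideal.map_mono hm
  · intro hn
    have : (n.asIdeal.comap (e : R →+* S)).IsMaximal :=
      Ideal.comap_isMaximal_of_surjective _ e.surjective
    refine ⟨⟨_, this⟩, Ideal.map_le_iff_le_comap.mp hn, MaximalSpectrum.ext ?_⟩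
    rw [hΦ]
    exact Ideal.map_comap_of_surjective _ e.surjective _

theorem vanishingIdeal_image_of_ringEquiv
    (hΦ : ∀ m, (Φ m).asIdeal = m.asIdeal.map (e : R →+* S)) (Z : Set (MaximalSpectrum R)) :
    vanishingIdeal (Φ '' Z) = (vanishingIdeal Z).map (e : R →+* S) := by
  simp only [vanishingIdeal, iInf_image, hΦ, Ideal.map_comap_of_equiv, Ideal.comap_iInf]

end RingEquiv

section IsIntegral

variable [Algebra R S] {ψ : MaximalSpectrum S → MaximalSpectrum R}

theorem image_zeroLocus_of_isIntegral [Algebra.IsIntegral R S]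
    (hψ : ∀ m, (ψ m).asIdeal = m.asIdeal.comap (algebraMap R S)) (I : Ideal S) :
    ψ '' zeroLocus I = zeroLocus (I.comap (algebraMap R S)) := by
  ext q
  constructor
  · rintro ⟨m, hm, rfl⟩
    rw [mem_zeroLocus, hψ]
    exact Ideal.comap_mono hm
  · intro hq
    obtain ⟨Q, hIQ, hQ, hQq⟩ := Ideal.exists_ideal_over_prime_of_isIntegral q.asIdeal I hq
    have hQmax : Q.IsMaximal :=
      Ideal.isMaximal_of_isIntegral_of_isMaximal_comap Q (hQq ▸ q.isMaximal)
    exact ⟨⟨Q, hQmax⟩, hIQ, MaximalSpectrum.ext (by rw [hψ, hQq])⟩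

theorem isClosedMap_of_isIntegral [Algebra.IsIntegral R S]
    (hψ : ∀ m, (ψ m).asIdeal = m.asIdeal.comap (algebraMap R S)) : IsClosedMap ψ := by
  intro Z hZ
  rw [← zeroLocus_vanishingIdeal_of_isClosed hZ, image_zeroLocus_of_isIntegral hψ]
  exact isClosed_zeroLocus _

theorem finite_preimage_singleton [Algebra.QuasiFinite R S]
    (hψ : ∀ m, (ψ m).asIdeal = m.asIdeal.comap (algebraMap R S)) (y : MaximalSpectrum R) :
    (ψ ⁻¹' {y}).Finite := by
  refine Set.Finite.of_finite_image ?_ (fun a _ b _ h => MaximalSpectrum.ext h)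
  refine (Algebra.QuasiFinite.finite_primesOver y.asIdeal).subset ?_
  rintro _ ⟨m, rfl : ψ m = y, rfl⟩
  exact ⟨m.isMaximal.isPrime, ⟨hψ m⟩⟩

theorem eq_zeroLocus_of_image_eq [Algebra.IsIntegral R S] [IsNoetherianRing S] [IsJacobsonRing R]
    (hψ : ∀ m, (ψ m).asIdeal = m.asIdeal.comap (algebraMap R S)) {p : Ideal S} [p.IsPrime]
    {C : Set (MaximalSpectrum S)} (hC : IsClosed C) (hCp : C ⊆ zeroLocus p)
    (h : ψ '' C = ψ '' zeroLocus p) : C = zeroLocus p := by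
  have hpC : p ≤ vanishingIdeal C := (subset_zeroLocus_iff_le_vanishingIdeal _ _).mp hCp
  rw [← zeroLocus_vanishingIdeal_of_isClosed hC] at h ⊢
  rw [image_zeroLocus_of_isIntegral hψ, image_zeroLocus_of_isIntegral hψ] at h
  have hcomap : (vanishingIdeal C).comap (algebraMap R S) = p.comap (algebraMap R S) := by
    refine le_antisymm ?_ (Ideal.comap_mono hpC)
    simpa [(Ideal.IsPrime.comap (algebraMap R S)).radical] using
      (zeroLocus_subset_zeroLocus_iff _ _).mp h.ge
  rw [(isRadical_vanishingIdeal C).eq_of_le_of_comap_eq hpC hcomap]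

theorem zeroLocus_subset_closure_inter_periodicPts [Module.Finite R S] [IsNoetherianRing S]
    [IsJacobsonRing R] (hψ : ∀ m, (ψ m).asIdeal = m.asIdeal.comap (algebraMap R S))
    {Φ : MaximalSpectrum S → MaximalSpectrum S} (hΦ : Injective Φ)
    {Φ' : MaximalSpectrum R ≃ₜ MaximalSpectrum R} (hψΦ : Semiconj ψ Φ Φ') (hD : PropertyD Φ')
    {p : Ideal S} [p.IsPrime]
    (hp : zeroLocus (p.comap (algebraMap R S)) ∈ periodicPts (image Φ')) :
    zeroLocus p ⊆ closure (zeroLocus p ∩ periodicPts Φ) := by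
  have hdense := (propertyD_iff_periodicPts Φ').mp hD _ (isClosed_zeroLocus _) hp
  rw [← image_zeroLocus_of_isIntegral hψ] at hdense
  calc zeroLocus p ⊆ closure (zeroLocus p ∩ ψ ⁻¹' periodicPts Φ') :=
        (isClosedMap_of_isIntegral hψ).subset_closure_inter_preimage (isClosed_zeroLocus p)
          (fun _ hC hCp h => eq_zeroLocus_of_image_eq hψ hC hCp h) hdense
    _ ⊆ closure (zeroLocus p ∩ periodicPts Φ) :=
        closure_mono (inter_subset_inter_right _
          (preimage_periodicPts_subset hΦ hψΦ (finite_preimage_singleton hψ)))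

end IsIntegral

end MaximalSpectrum

open MaximalSpectrum

theorem density_property_ascends_along_finite_ring_hom_general
    {R₁ R₂ : Type*} [CommRing R₁] [CommRing R₂]
    [IsNoetherianRing R₁]
    [IsJacobsonRing R₂]
    (ψs : R₂ →+* R₁) (hfin : ψs.Finite)
    (Φ₁ : R₁ ≃+* R₁) (Φ₂ : R₂ ≃+* R₂)
    (hcomm : ψs.comp (Φ₂ : R₂ →+* R₂) = (Φ₁ : R₁ →+* R₁).comp ψs)
    (ψ : MaximalSpectrum R₁ → MaximalSpectrum R₂)
    (hψ : ∀ m : MaximalSpectrum R₁, (ψ m).asIdeal = m.asIdeal.comap ψs)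
    (Φ₁' : MaximalSpectrum R₁ ≃ₜ MaximalSpectrum R₁)
    (hΦ₁' : ∀ m : MaximalSpectrum R₁, (Φ₁' m).asIdeal = m.asIdeal.map (Φ₁ : R₁ →+* R₁))
    (Φ₂' : MaximalSpectrum R₂ ≃ₜ MaximalSpectrum R₂)
    (hΦ₂' : ∀ m : MaximalSpectrum R₂, (Φ₂' m).asIdeal = m.asIdeal.map (Φ₂ : R₂ →+* R₂))
    (hD : PropertyD Φ₂') : PropertyD Φ₁' := by
  algebraize [ψs]
  have hψΦ : Semiconj ψ Φ₁' Φ₂' := fun m => MaximalSpectrum.ext <| by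
    rw [hΦ₂', hψ, hψ, hΦ₁', Ideal.comap_map_of_comp_eq_comp hcomm]
  rw [propertyD_iff_periodicPts]
  intro Z hZ hZper m hm
  rw [← zeroLocus_vanishingIdeal_of_isClosed hZ] at hm ⊢
  obtain ⟨p, hp, hpm⟩ := Ideal.exists_minimalPrimes_le hm
  have : p.IsPrime := hp.1.1
  have hpper : p ∈ periodicPts (Ideal.map (Φ₁ : R₁ →+* R₁)) :=
    Ideal.mem_periodicPts_of_mem_minimalPrimes Φ₁
      (Semiconj.mapsTo_periodicPts (vanishingIdeal_image_of_ringEquiv Φ₁ hΦ₁') hZper) hp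
  have hqper : zeroLocus (p.comap ψs) ∈ periodicPts (image Φ₂') :=
    Semiconj.mapsTo_periodicPts (fun I => (image_zeroLocus_of_ringEquiv Φ₂ hΦ₂' I).symm)
      (Semiconj.mapsTo_periodicPts (Ideal.comap_map_of_comp_eq_comp hcomm) hpper)
  exact closure_mono (inter_subset_inter_left _ (zeroLocus_anti_mono hp.le))
    (zeroLocus_subset_closure_inter_periodicPts hψ Φ₁'.injective hψΦ hD hqper hpm)

theorem density_property_ascends_along_finite_ring_hom
    {R₁ R₂ : Type*} [CommRing R₁] [CommRing R₂]
    [IsNoetherianRing R₁] [IsNoetherianRing R₂]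
    [IsJacobsonRing R₁] [IsJacobsonRing R₂]
    (ψs : R₂ →+* R₁) (hfin : ψs.Finite)
    (Φ₁ : R₁ ≃+* R₁) (Φ₂ : R₂ ≃+* R₂)
    (hcomm : ψs.comp (Φ₂ : R₂ →+* R₂) = (Φ₁ : R₁ →+* R₁).comp ψs)
    (ψ : MaximalSpectrum R₁ → MaximalSpectrum R₂)
    (hψ : ∀ m : MaximalSpectrum R₁, (ψ m).asIdeal = m.asIdeal.comap ψs)
    (Φ₁' : MaximalSpectrum R₁ ≃ₜ MaximalSpectrum R₁)
    (hΦ₁' : ∀ m : MaximalSpectrum R₁, (Φ₁' m).asIdeal = m.asIdeal.map (Φ₁ : R₁ →+* R₁))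
    (Φ₂' : MaximalSpectrum R₂ ≃ₜ MaximalSpectrum R₂)
    (hΦ₂' : ∀ m : MaximalSpectrum R₂, (Φ₂' m).asIdeal = m.asIdeal.map (Φ₂ : R₂ →+* R₂))
    (hD : PropertyD Φ₂') : PropertyD Φ₁' :=
  density_property_ascends_along_finite_ring_hom_general ψs hfin Φ₁ Φ₂ hcomm ψ hψ Φ₁' hΦ₁' Φ₂' hΦ₂'
    hD
end

section
/- Let R be a commutative Noetherian local ring with finite residue field, and let Φ: R → R be a ring automorphism. For each integer n > 0, let I_n be the ideal of R generated by the set {Φⁿ(x) − x : x ∈ R}. Then ⋂_{n>0} I_n = 0; equivalently, the canonical map R → lim_n R/I_n is injective. -/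
/-!
Krull's intersection theorem gives `⋂ₖ mᵏ = 0`, so it suffices to find, for each `k`, some
`n > 0` with `Iₙ ⊆ mᵏ`. Since `Φ` preserves `m`, it induces an automorphism of the finite ring
`R ⧸ mᵏ`; this automorphism has finite order `n`, and then `Φⁿ(x) - x ∈ mᵏ` for all `x`.
-/

namespace Ideal

variable {R : Type*} [CommRing R] (I : Ideal R) (Φ : R ≃+* R)

theorem quotientEquiv_pow_mk (hI : I = I.map (Φ : R →+* R)) (j : ℕ) (x : R) :
    (quotientEquiv I I Φ hI ^ j) (Quotient.mk I x) = Quotient.mk I ((Φ ^ j) x) := by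
  induction j generalizing x with
  | zero => rfl
  | succ j ih =>
    rw [pow_succ, RingAut.mul_apply, quotientEquiv_mk, ih, pow_succ, RingAut.mul_apply]

theorem exists_pow_sub_mem_of_finite_quotient [Finite (R ⧸ I)] (hI : I = I.map (Φ : R →+* R)) :
    ∃ n, 0 < n ∧ ∀ x, (Φ ^ n) x - x ∈ I := by
  have : Finite (RingAut (R ⧸ I)) := Finite.of_injective _ DFunLike.coe_injective
  obtain ⟨n, hn, hpow⟩ := (isOfFinOrder_of_finite (quotientEquiv I I Φ hI)).exists_pow_eq_one
  refine ⟨n, hn, fun x => Quotient.eq.mp ?_⟩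
  rw [← quotientEquiv_pow_mk I Φ hI, hpow, RingAut.one_apply]

end Ideal

theorem iInf_coinvariance_ideals_eq_bot
    {R : Type*} [CommRing R] [IsNoetherianRing R] [IsLocalRing R]
    [Finite (IsLocalRing.ResidueField R)] (Φ : R ≃+* R) :
    ⨅ (n : ℕ) (_ : 0 < n),
      Ideal.span (Set.range fun x : R => (Φ ^ n) x - x) = ⊥ := by
  set m := IsLocalRing.maximalIdeal R
  rw [eq_bot_iff,
    ← Ideal.iInf_pow_eq_bot_of_isLocalRing m (IsLocalRing.maximalIdeal.isMaximal R).ne_top]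
  refine le_iInf fun k => ?_
  have : Finite (R ⧸ m ^ k) := IsLocalRing.finite_quotient_iff.mpr ⟨k, le_rfl⟩
  have hΦm : m ^ k = (m ^ k).map (Φ : R →+* R) := by
    rw [Ideal.map_pow]
    exact congrArg (· ^ k) (IsLocalRing.map_ringEquiv_maximalIdeal Φ).symm
  obtain ⟨n, hn, hΦn⟩ := (m ^ k).exists_pow_sub_mem_of_finite_quotient Φ hΦm
  exact (iInf₂_le n hn).trans (Ideal.span_le.mpr (Set.range_subset_iff.mpr hΦn))
end

section
/- Let f: R → S be an integral homomorphism of commutative rings. Then the induced map ψ: Spm S → Spm R sending a maximal ideal m of S to f⁻¹(m) (which is a maximal ideal of R since f is integral) is a closed map with respect to the Zariski topologies: the image under ψ of any closed subset of Spm S is closed in Spm R. -/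
/-!
A closed subset of `Spm S` is the trace of a closed `Z ⊆ Spec S`, and `Spec S → Spec R` is
closed for integral `f`. The trace of `comap f '' Z` on `Spm R` is exactly the image of the trace
of `Z`: a prime of `Z` lying over a maximal ideal `n` is contained in a maximal ideal, still in `Z`
since closed sets are stable under specialization, and that maximal ideal also lies over `n`.
-/

open PrimeSpectrum

theorem PrimeSpectrum.exists_maximal_le_mem_of_stableUnderSpecialization {S : Type*} [CommRing S]
    {Z : Set (PrimeSpectrum S)} (hZ : StableUnderSpecialization Z) {p : PrimeSpectrum S}
    (hp : p ∈ Z) :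
    ∃ m : MaximalSpectrum S, p.asIdeal ≤ m.asIdeal ∧ m.toPrimeSpectrum ∈ Z := by
  obtain ⟨m, hm, hpm⟩ := p.asIdeal.exists_le_maximal p.isPrime.ne_top
  exact ⟨⟨m, hm⟩, hpm, hZ ((le_iff_specializes p ⟨m, hm.isPrime⟩).mp hpm) hp⟩

theorem MaximalSpectrum.image_preimage_toPrimeSpectrum {R S : Type*} [CommRing R] [CommRing S]
    {f : R →+* S} {ψ : MaximalSpectrum S → MaximalSpectrum R}
    (hψ : ∀ m : MaximalSpectrum S, (ψ m).asIdeal = m.asIdeal.comap f)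
    {Z : Set (PrimeSpectrum S)} (hZ : StableUnderSpecialization Z) :
    ψ '' (toPrimeSpectrum ⁻¹' Z) = toPrimeSpectrum ⁻¹' (comap f '' Z) := by
  ext n
  constructor
  · rintro ⟨m, hmZ, rfl⟩
    exact ⟨m.toPrimeSpectrum, hmZ, PrimeSpectrum.ext (hψ m).symm⟩
  · rintro ⟨p, hpZ, hpn⟩
    obtain ⟨m, hpm, hmZ⟩ := exists_maximal_le_mem_of_stableUnderSpecialization hZ hpZ
    have hnm : n.asIdeal ≤ (ψ m).asIdeal := by
      rw [hψ]
      exact (congrArg PrimeSpectrum.asIdeal hpn).ge.trans (Ideal.comap_mono hpm)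
    exact ⟨m, hmZ, MaximalSpectrum.ext (n.isMaximal.eq_of_le (ψ m).isMaximal.ne_top hnm).symm⟩

theorem maximalSpectrum_comap_isClosedMap_of_isIntegral
    {R S : Type*} [CommRing R] [CommRing S] (f : R →+* S)
    (hf : f.IsIntegral)
    (ψ : MaximalSpectrum S → MaximalSpectrum R)
    (hψ : ∀ m : MaximalSpectrum S, (ψ m).asIdeal = m.asIdeal.comap f) :
    IsClosedMap ψ := by
  intro C hC
  obtain ⟨Z, hZ, rfl⟩ := isClosed_induced_iff.mp hC
  rw [MaximalSpectrum.image_preimage_toPrimeSpectrum hψ hZ.stableUnderSpecialization]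
  exact (isClosedMap_comap_of_isIntegral f hf Z hZ).preimage
    MaximalSpectrum.toPrimeSpectrum_continuous
end

section
/- Let O be a discrete valuation ring and L a field equipped with an injective ring homomorphism O → L. Let R be a commutative Noetherian local O-algebra with finite residue field, and let Φ: R → R be an O-algebra automorphism. For each integer n > 0, let I_n be the ideal of R generated by {Φⁿ(x) − x : x ∈ R}. Assume that for every n > 0 the quotient R/I_n is a finitely generated flat O-module and that the ring (R/I_n) ⊗_O L is reduced. If α ∈ R is such that for every n > 0 the image of α in (R/I_n) ⊗_O L lies in every maximal ideal of (R/I_n) ⊗_O L, then α = 0. -/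
/-!
Since `(R/Iₙ) ⊗ L` is finite over the field `L` it is Artinian, hence Jacobson, and being
reduced its Jacobson radical vanishes; flatness of `R/Iₙ` over `O` then forces `α ∈ Iₙ` for
all `n > 0`. On the other hand `Φ` induces an automorphism of the finite ring `R/𝔪ᵏ`, which
has some finite order `n > 0`, so `Iₙ ⊆ 𝔪ᵏ`. Thus `α ∈ ⋂ₖ 𝔪ᵏ = 0` by Krull's intersection
theorem.
-/

open TensorProduct IsLocalRing

theorem IsJacobsonRing.eq_zero_of_forall_isMaximal_mem {A : Type*} [CommRing A]
    [IsJacobsonRing A] [IsReduced A] {a : A} (ha : ∀ M : Ideal A, M.IsMaximal → a ∈ M) : a = 0 := by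
  have hjac : a ∈ (⊥ : Ideal A).jacobson := Ideal.mem_sInf.mpr fun M hM ↦ ha M hM.2
  rwa [IsJacobsonRing.out ‹_› Ideal.isRadical_bot, Ideal.mem_bot] at hjac

theorem Module.Flat.eq_zero_of_forall_isMaximal_tmul_one_mem {O L A : Type*} [CommRing O]
    [Field L] [Algebra O L] [FaithfulSMul O L] [CommRing A] [Algebra O A] [Module.Finite O A]
    [Module.Flat O A] [IsReduced (A ⊗[O] L)] {a : A}
    (ha : ∀ M : Ideal (A ⊗[O] L), M.IsMaximal → a ⊗ₜ[O] (1 : L) ∈ M) : a = 0 := by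
  let e := (Algebra.TensorProduct.comm O A L).toRingEquiv
  have : IsArtinianRing (L ⊗[O] A) := IsArtinianRing.of_finite L _
  have : IsArtinianRing (A ⊗[O] L) := e.symm.isArtinianRing
  refine Module.Flat.tensorProduct_mk_injective O (S := L) (M := A) ?_
  simpa [e] using congrArg e (IsJacobsonRing.eq_zero_of_forall_isMaximal_mem ha)

theorem AlgEquiv.exists_pow_sub_mem_of_finite_quotient {O R : Type*} [CommRing O] [CommRing R]
    [Algebra O R] (Φ : R ≃ₐ[O] R) {J : Ideal R} (hJ : J.map Φ = J) [Finite (R ⧸ J)] :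
    ∃ n, 0 < n ∧ ∀ x, (Φ ^ n) x - x ∈ J := by
  let Φ' : (R ⧸ J) ≃ₐ[O] (R ⧸ J) := Ideal.quotientEquivAlg J J Φ hJ.symm
  have hΦ' : ∀ n x, (Φ' ^ n) (Ideal.Quotient.mk J x) = Ideal.Quotient.mk J ((Φ ^ n) x) := by
    intro n
    induction n with
    | zero => simp
    | succ n ih =>
      intro x
      rw [pow_succ, AlgEquiv.mul_apply, pow_succ, AlgEquiv.mul_apply]
      exact ih (Φ x)
  have : Finite ((R ⧸ J) ≃ₐ[O] (R ⧸ J)) := Finite.of_injective _ DFunLike.coe_injective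
  refine ⟨orderOf Φ', orderOf_pos Φ', fun x ↦ Ideal.Quotient.eq.mp ?_⟩
  rw [← hΦ', pow_orderOf_eq_one, AlgEquiv.one_apply]

theorem IsLocalRing.exists_pow_sub_mem_maximalIdeal_pow {O R : Type*} [CommRing O] [CommRing R]
    [Algebra O R] [IsNoetherianRing R] [IsLocalRing R] [Finite (ResidueField R)]
    (Φ : R ≃ₐ[O] R) (k : ℕ) : ∃ n, 0 < n ∧ ∀ x, (Φ ^ n) x - x ∈ maximalIdeal R ^ k := by
  have : Finite (R ⧸ maximalIdeal R ^ k) := finite_quotient_iff.mpr ⟨k, le_rfl⟩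
  refine Φ.exists_pow_sub_mem_of_finite_quotient ?_
  rw [Ideal.map_pow]
  congr 1
  exact map_ringEquiv_maximalIdeal Φ.toRingEquiv

open TensorProduct in
theorem element_vanishing_at_all_arithmetic_points_is_zero_general
    {O : Type*} [CommRing O]
    {L : Type*} [Field L] [Algebra O L]
    (hinj : Function.Injective (algebraMap O L))
    {R : Type*} [CommRing R] [Algebra O R] [IsNoetherianRing R] [IsLocalRing R]
    [Finite (IsLocalRing.ResidueField R)]
    (Φ : R ≃ₐ[O] R)
    (I : ℕ → Ideal R)
    (hI : ∀ n : ℕ, I n = Ideal.span (Set.range fun x : R => (Φ ^ n) x - x))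
    (hfin : ∀ n : ℕ, 0 < n → Module.Finite O (R ⧸ I n))
    (hflat : ∀ n : ℕ, 0 < n → Module.Flat O (R ⧸ I n))
    (hred : ∀ n : ℕ, 0 < n → IsReduced ((R ⧸ I n) ⊗[O] L))
    (α : R)
    (hα : ∀ n : ℕ, 0 < n → ∀ M : Ideal ((R ⧸ I n) ⊗[O] L), M.IsMaximal →
      (Ideal.Quotient.mk (I n) α) ⊗ₜ[O] (1 : L) ∈ M) :
    α = 0 := by
  have : FaithfulSMul O L := (faithfulSMul_iff_algebraMap_injective O L).mpr hinj
  have hαI : ∀ n, 0 < n → α ∈ I n := fun n hn ↦ by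
    have := hfin n hn
    have := hflat n hn
    have := hred n hn
    exact Ideal.Quotient.eq_zero_iff_mem.mp
      (Module.Flat.eq_zero_of_forall_isMaximal_tmul_one_mem (hα n hn))
  have hαpow : ∀ k, α ∈ maximalIdeal R ^ k := fun k ↦ by
    obtain ⟨n, hn, hΦn⟩ := exists_pow_sub_mem_maximalIdeal_pow Φ k
    have hIn : I n ≤ maximalIdeal R ^ k := by
      rw [hI n, Ideal.span_le]
      rintro _ ⟨x, rfl⟩
      exact hΦn x
    exact hIn (hαI n hn)
  have hKrull :=
    Ideal.iInf_pow_eq_bot_of_isLocalRing (maximalIdeal R) (maximalIdeal.isMaximal R).ne_top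
  simpa [hKrull] using Submodule.mem_iInf _ |>.mpr hαpow

open TensorProduct in
theorem element_vanishing_at_all_arithmetic_points_is_zero
    {O : Type*} [CommRing O] [IsDomain O] [IsDiscreteValuationRing O]
    {L : Type*} [Field L] [Algebra O L]
    (hinj : Function.Injective (algebraMap O L))
    {R : Type*} [CommRing R] [Algebra O R] [IsNoetherianRing R] [IsLocalRing R]
    [Finite (IsLocalRing.ResidueField R)]
    (Φ : R ≃ₐ[O] R)
    (I : ℕ → Ideal R)
    (hI : ∀ n : ℕ, I n = Ideal.span (Set.range fun x : R => (Φ ^ n) x - x))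
    (hfin : ∀ n : ℕ, 0 < n → Module.Finite O (R ⧸ I n))
    (hflat : ∀ n : ℕ, 0 < n → Module.Flat O (R ⧸ I n))
    (hred : ∀ n : ℕ, 0 < n → IsReduced ((R ⧸ I n) ⊗[O] L))
    (α : R)
    (hα : ∀ n : ℕ, 0 < n → ∀ M : Ideal ((R ⧸ I n) ⊗[O] L), M.IsMaximal →
      (Ideal.Quotient.mk (I n) α) ⊗ₜ[O] (1 : L) ∈ M) :
    α = 0 :=
  element_vanishing_at_all_arithmetic_points_is_zero_general hinj Φ I hI hfin hflat hred α hα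
end
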